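/- Let m > 2. If m is even, the distance signless Laplacian matrix of the star K_{1,m/2} (the co-centralizer graph of the metacyclic group M_{2mn}) has eigenvalue m − 3 with multiplicity m/2 − 1 and eigenvalues (1/2)[(5m/2 − 3) ± √(9m²/4 − 7m + 9)], each with multiplicity 1. If m is odd, the distance signless Laplacian matrix of the star K_{1,m} (the co-centralizer graph of M_{2mn}) has eigenvalue 2m − 3 with multiplicity m − 1 and eigenvalues (1/2)[(5m − 3) ± √(9m² − 14m + 9)], each with multiplicity 1. -/
import Mathlib


open Polynomial

/-- The star graph `K_{1,n}` on `n+1` vertices. -/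
def starGraph (n : ℕ) : SimpleGraph (Fin 1 ⊕ Fin n) :=
  completeBipartiteGraph (Fin 1) (Fin n)

/-- The distance matrix of a graph. -/
noncomputable def distMatrix {V : Type*} [Fintype V] (G : SimpleGraph V) : Matrix V V ℝ :=
  Matrix.of fun u v => (G.dist u v : ℝ)

/-- The diagonal matrix of transmissions (sums of distances to all other vertices). -/
noncomputable def transMatrix {V : Type*} [Fintype V] [DecidableEq V] (G : SimpleGraph V) :
    Matrix V V ℝ :=
  Matrix.diagonal fun v => ∑ u, (G.dist v u : ℝ)

/-- The distance signless Laplacian matrix `D^Q = Tr + D`. -/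
noncomputable def distSignlessLapMatrix {V : Type*} [Fintype V] [DecidableEq V]
    (G : SimpleGraph V) : Matrix V V ℝ :=
  transMatrix G + distMatrix G


open Matrix

set_option linter.unusedSectionVars false

lemma star_adj_lr (n : ℕ) (i : Fin 1) (j : Fin n) :
    (starGraph n).Adj (Sum.inl i) (Sum.inr j) := by simp [starGraph]

lemma star_dist_lr (n : ℕ) (i : Fin 1) (j : Fin n) :
    (starGraph n).dist (Sum.inl i) (Sum.inr j) = 1 :=
  SimpleGraph.dist_eq_one_iff_adj.mpr (star_adj_lr n i j)

lemma star_dist_rl (n : ℕ) (i : Fin n) (j : Fin 1) :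
    (starGraph n).dist (Sum.inr i) (Sum.inl j) = 1 :=
  SimpleGraph.dist_eq_one_iff_adj.mpr (star_adj_lr n j i).symm

lemma star_dist_ll (n : ℕ) (i j : Fin 1) :
    (starGraph n).dist (Sum.inl i) (Sum.inl j) = 0 := by
  have : i = j := Subsingleton.elim _ _
  subst this
  exact SimpleGraph.dist_self

lemma star_dist_rr (n : ℕ) (i j : Fin n) (h : i ≠ j) :
    (starGraph n).dist (Sum.inr i) (Sum.inr j) = 2 := by
  have hle : (starGraph n).dist (Sum.inr i) (Sum.inr j) ≤ 2 := by
    simpa using SimpleGraph.dist_le (SimpleGraph.Walk.cons ((star_adj_lr n 0 i).symm)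
      (SimpleGraph.Walk.cons (star_adj_lr n 0 j) SimpleGraph.Walk.nil))
  have hpos : 0 < (starGraph n).dist (Sum.inr i) (Sum.inr j) :=
    SimpleGraph.Reachable.pos_dist_of_ne ⟨SimpleGraph.Walk.cons ((star_adj_lr n 0 i).symm)
      (SimpleGraph.Walk.cons (star_adj_lr n 0 j) SimpleGraph.Walk.nil)⟩ (by simp [h])
  have hne1 : (starGraph n).dist (Sum.inr i) (Sum.inr j) ≠ 1 := by
    intro hd
    have := SimpleGraph.dist_eq_one_iff_adj.mp hd
    simp [starGraph] at this
  omega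

noncomputable def Mstar (n : ℕ) : Matrix (Fin 1 ⊕ Fin n) (Fin 1 ⊕ Fin n) ℝ :=
  Matrix.of fun u v =>
    match u, v with
    | Sum.inl _, Sum.inl _ => (n : ℝ)
    | Sum.inl _, Sum.inr _ => 1
    | Sum.inr _, Sum.inl _ => 1
    | Sum.inr i, Sum.inr j => if i = j then 2 * (n : ℝ) - 1 else 2

lemma star_dist_rr_cast (n : ℕ) (i j : Fin n) :
    (((starGraph n).dist (Sum.inr i) (Sum.inr j) : ℕ) : ℝ) = if i = j then 0 else 2 := by
  by_cases h : i = j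
  · subst h; simp [SimpleGraph.dist_self]
  · simp [h, star_dist_rr n i j h]

lemma distSignlessLap_star_eq (n : ℕ) : distSignlessLapMatrix (starGraph n) = Mstar n := by
  ext u v
  rcases u with a | i <;> rcases v with b | j
  · have hab : a = b := Subsingleton.elim _ _
    subst hab
    simp [distSignlessLapMatrix, transMatrix, distMatrix, Mstar, Fintype.sum_sum_type,
      star_dist_ll, star_dist_lr]
  · simp [distSignlessLapMatrix, transMatrix, distMatrix, Mstar, Matrix.diagonal,
      star_dist_lr]
  · simp [distSignlessLapMatrix, transMatrix, distMatrix, Mstar, Matrix.diagonal,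
      star_dist_rl]
  · by_cases h : i = j
    · subst h
      simp [distSignlessLapMatrix, transMatrix, distMatrix, Mstar, Fintype.sum_sum_type,
        star_dist_rl, star_dist_rr_cast, SimpleGraph.dist_self, Finset.sum_ite_eq,
        Finset.mul_sum]
      have hsum : (∑ x : Fin n, if i = x then (0:ℝ) else 2) = 2*n - 2 := by
        have he : ∀ x : Fin n, (if i = x then (0:ℝ) else 2) = 2 - (if i = x then 2 else 0) := by
          intro x; split <;> ring
        simp only [he, Finset.sum_sub_distrib, Finset.sum_const, Finset.sum_ite_eq,
          Finset.mem_univ, if_true, Finset.card_univ, Fintype.card_fin, nsmul_eq_mul]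
        ring
      rw [hsum]
      ring
    · simp [distSignlessLapMatrix, transMatrix, distMatrix, Mstar, Matrix.diagonal_apply_ne _
        (by simp [h] : (Sum.inr i : Fin 1 ⊕ Fin n) ≠ Sum.inr j), star_dist_rr n i j h, h]

noncomputable def sdv (n : ℕ) : ℝ := Real.sqrt (9 * (n : ℝ) ^ 2 - 14 * n + 9)
noncomputable def rpv (n : ℕ) : ℝ := ((5 * (n : ℝ) - 3) + sdv n) / 2
noncomputable def rmv (n : ℕ) : ℝ := ((5 * (n : ℝ) - 3) - sdv n) / 2
noncomputable def av (n : ℕ) : ℝ := 2 * (n : ℝ) - 3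
noncomputable def spv (n : ℕ) : ℝ := rpv n - (4 * (n : ℝ) - 3)
noncomputable def smv (n : ℕ) : ℝ := rmv n - (4 * (n : ℝ) - 3)

lemma dv_pos (n : ℕ) : 0 < 9 * (n : ℝ) ^ 2 - 14 * n + 9 := by nlinarith [sq_nonneg ((n:ℝ) - 1)]

lemma sdv_pos (n : ℕ) : 0 < sdv n := Real.sqrt_pos.mpr (dv_pos n)

lemma sdv_sq (n : ℕ) : sdv n ^ 2 = 9 * (n : ℝ) ^ 2 - 14 * n + 9 :=
  Real.sq_sqrt (dv_pos n).le

lemma sp_sub_sm (n : ℕ) : spv n - smv n = sdv n := by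
  unfold spv smv rpv rmv; ring

lemma sp_mul_sm (n : ℕ) : spv n * smv n = -(n : ℝ) := by
  unfold spv smv rpv rmv
  linear_combination (-(1:ℝ)/4) * sdv_sq n

lemma rp_quad (n : ℕ) : rpv n ^ 2 - (5 * (n:ℝ) - 3) * rpv n + (4 * (n:ℝ)^2 - 4 * n) = 0 := by
  unfold rpv
  linear_combination ((1:ℝ)/4) * sdv_sq n

lemma rm_quad (n : ℕ) : rmv n ^ 2 - (5 * (n:ℝ) - 3) * rmv n + (4 * (n:ℝ)^2 - 4 * n) = 0 := by
  unfold rmv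
  linear_combination ((1:ℝ)/4) * sdv_sq n

lemma sp_rp (n : ℕ) : (n:ℝ) * spv n + (n:ℝ) = rpv n * spv n := by
  have h := rp_quad n
  unfold spv
  nlinarith [h]

lemma sm_rm (n : ℕ) : (n:ℝ) * smv n + (n:ℝ) = rmv n * smv n := by
  have h := rm_quad n
  unfold smv
  nlinarith [h]

noncomputable def Pg (n : ℕ) [NeZero n] : Matrix (Fin 1 ⊕ Fin n) (Fin 1 ⊕ Fin n) ℝ :=
  Matrix.of fun u v =>
    match u, v with
    | Sum.inl _, Sum.inl _ => spv n
    | Sum.inl _, Sum.inr j => if j = 0 then smv n else 0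
    | Sum.inr _, Sum.inl _ => 1
    | Sum.inr i, Sum.inr j => if j = 0 then 1 else if i = j then 1 else if i = 0 then -1 else 0

noncomputable def Qg (n : ℕ) [NeZero n] : Matrix (Fin 1 ⊕ Fin n) (Fin 1 ⊕ Fin n) ℝ :=
  Matrix.of fun u v =>
    match u, v with
    | Sum.inl _, Sum.inl _ => 1 / sdv n
    | Sum.inl _, Sum.inr _ => -smv n / ((n:ℝ) * sdv n)
    | Sum.inr k, Sum.inl _ => if k = 0 then -1 / sdv n else 0
    | Sum.inr k, Sum.inr j =>
        if k = 0 then spv n / ((n:ℝ) * sdv n) else (if j = k then 1 else 0) - 1 / (n:ℝ)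

noncomputable def Dg (n : ℕ) [NeZero n] : Matrix (Fin 1 ⊕ Fin n) (Fin 1 ⊕ Fin n) ℝ :=
  Matrix.diagonal (Sum.elim (fun _ => rpv n) (fun j => if j = 0 then rmv n else av n))

lemma sum_fin_split (n : ℕ) [NeZero n] (g : Fin n → ℝ) :
    ∑ k, g k = g 0 + ∑ k ∈ Finset.univ.erase 0, g k :=
  (Finset.add_sum_erase _ g (Finset.mem_univ 0)).symm

lemma card_erase_zero (n : ℕ) [NeZero n] :
    (Finset.univ.erase (0 : Fin n)).card = n - 1 := by
  rw [Finset.card_erase_of_mem (Finset.mem_univ _), Finset.card_univ, Fintype.card_fin]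

lemma cast_pred (n : ℕ) [NeZero n] : ((n - 1 : ℕ) : ℝ) = (n : ℝ) - 1 := by
  have h : 1 ≤ n := Nat.one_le_iff_ne_zero.mpr (NeZero.ne n)
  push_cast [h]
  ring

section entries
variable (n : ℕ) [NeZero n] (a b : Fin 1) (i j : Fin n)

@[simp] lemma Pg_ll : Pg n (Sum.inl a) (Sum.inl b) = spv n := rfl
@[simp] lemma Pg_lr : Pg n (Sum.inl a) (Sum.inr j) = if j = 0 then smv n else 0 := rfl
@[simp] lemma Pg_rl : Pg n (Sum.inr i) (Sum.inl b) = 1 := rfl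
@[simp] lemma Pg_rr : Pg n (Sum.inr i) (Sum.inr j)
    = if j = 0 then 1 else if i = j then 1 else if i = 0 then -1 else 0 := rfl

@[simp] lemma Qg_ll : Qg n (Sum.inl a) (Sum.inl b) = 1 / sdv n := rfl
@[simp] lemma Qg_lr : Qg n (Sum.inl a) (Sum.inr j) = -smv n / ((n:ℝ) * sdv n) := rfl
@[simp] lemma Qg_rl : Qg n (Sum.inr i) (Sum.inl b) = if i = 0 then -1 / sdv n else 0 := rfl
@[simp] lemma Qg_rr : Qg n (Sum.inr i) (Sum.inr j)
    = if i = 0 then spv n / ((n:ℝ) * sdv n) else (if j = i then 1 else 0) - 1 / (n:ℝ) := rfl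

@[simp] lemma Mstar_ll : Mstar n (Sum.inl a) (Sum.inl b) = (n : ℝ) := rfl
@[simp] lemma Mstar_lr : Mstar n (Sum.inl a) (Sum.inr j) = 1 := rfl
@[simp] lemma Mstar_rl : Mstar n (Sum.inr i) (Sum.inl b) = 1 := rfl
@[simp] lemma Mstar_rr : Mstar n (Sum.inr i) (Sum.inr j)
    = if i = j then 2 * (n:ℝ) - 1 else 2 := rfl

end entries

lemma PQ_one (n : ℕ) [NeZero n] : Pg n * Qg n = 1 := by
  have hr : (n : ℝ) ≠ 0 := Nat.cast_ne_zero.mpr (NeZero.ne n)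
  have hsd : sdv n ≠ 0 := (sdv_pos n).ne'
  have hsp : spv n - smv n = sdv n := sp_sub_sm n
  have hrr : (n:ℝ) * (1/(n:ℝ)) = 1 := by field_simp
  have hfrac : spv n / ((n:ℝ) * sdv n) - smv n / ((n:ℝ) * sdv n) = 1/(n:ℝ) := by
    rw [div_sub_div_same, hsp, mul_comm, div_mul_eq_div_div, div_self hsd]
  ext u v
  rw [Matrix.mul_apply, Fintype.sum_sum_type]
  rcases u with a | i <;> rcases v with b | j
  · have hab : a = b := Subsingleton.elim _ _
    subst hab
    rw [Matrix.one_apply_eq]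
    simp only [Pg_ll, Qg_ll, Pg_lr, Qg_rl, Fin.sum_univ_one]
    rw [Finset.sum_eq_single 0 (fun k _ hk => by simp [hk]) (by simp)]
    norm_num
    field_simp
    linear_combination hsp
  · rw [Matrix.one_apply_ne (by simp)]
    simp only [Pg_ll, Qg_lr, Pg_lr, Qg_rr, Fin.sum_univ_one]
    rw [Finset.sum_eq_single 0 (fun k _ hk => by simp [hk]) (by simp)]
    norm_num
    ring
  · rw [Matrix.one_apply_ne (by simp)]
    simp only [Pg_rl, Qg_ll, Pg_rr, Qg_rl, Fin.sum_univ_one]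
    rw [Finset.sum_eq_single 0 (fun k _ hk => by simp [hk]) (by simp)]
    norm_num
    ring
  · rw [Matrix.one_apply]
    simp only [Pg_rl, Qg_lr, Pg_rr, Qg_rr, Fin.sum_univ_one]
    rw [sum_fin_split]
    by_cases hi : i = 0
    · subst hi
      have hcong : ∀ k ∈ Finset.univ.erase (0 : Fin n),
          (if k = 0 then (1:ℝ) else if (0:Fin n) = k then 1 else if (0:Fin n) = 0 then -1 else 0) *
            (if k = 0 then spv n / ((n:ℝ) * sdv n) else (if j = k then 1 else 0) - 1/(n:ℝ))
          = 1/(n:ℝ) - (if j = k then 1 else 0) := by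
        intro k hk
        rw [Finset.mem_erase] at hk
        rw [if_neg hk.1, if_neg (fun h => hk.1 h.symm), if_pos rfl, if_neg hk.1]
        ring
      rw [Finset.sum_congr rfl hcong, Finset.sum_sub_distrib, Finset.sum_const,
        card_erase_zero, nsmul_eq_mul, cast_pred, Finset.sum_ite_eq]
      by_cases hj : j = 0
      · subst hj
        norm_num
        linear_combination hfrac + hrr
      · have hj' : ¬((0:Fin n) = j) := fun h => hj h.symm
        norm_num [Finset.mem_erase, hj, hj']
        linear_combination hfrac + hrr
    · have hcong : ∀ k ∈ Finset.univ.erase (0 : Fin n),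
          (if k = 0 then (1:ℝ) else if i = k then 1 else if i = 0 then -1 else 0) *
            (if k = 0 then spv n / ((n:ℝ) * sdv n) else (if j = k then 1 else 0) - 1/(n:ℝ))
          = if i = k then (if j = k then 1 else 0) - 1/(n:ℝ) else 0 := by
        intro k hk
        rw [Finset.mem_erase] at hk
        rw [if_neg hk.1, if_neg hk.1]
        by_cases hik : i = k
        · rw [if_pos hik, if_pos hik, one_mul]
        · rw [if_neg hik, if_neg hik, if_neg hi, zero_mul]
      rw [Finset.sum_congr rfl hcong, Finset.sum_ite_eq,
        if_pos (Finset.mem_erase.mpr ⟨hi, Finset.mem_univ i⟩)]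
      by_cases hij : i = j
      · subst hij
        norm_num
        linear_combination hfrac
      · have hij' : ¬(j = i) := fun h => hij h.symm
        norm_num [hij, hij']
        linear_combination hfrac

lemma MP_eq (n : ℕ) [NeZero n] : Mstar n * Pg n = Pg n * Dg n := by
  have hsp4 : spv n + (4*(n:ℝ) - 3) = rpv n := by unfold spv; ring
  have hsm4 : smv n + (4*(n:ℝ) - 3) = rmv n := by unfold smv; ring
  ext u v
  rw [Matrix.mul_apply, Fintype.sum_sum_type]
  conv_rhs => rw [Dg, Matrix.mul_diagonal]
  rcases u with a | i <;> rcases v with b | j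
  · simp only [Mstar_ll, Pg_ll, Mstar_lr, Pg_rl, Fin.sum_univ_one, Sum.elim_inl, mul_one,
      Finset.sum_const, Finset.card_univ, Fintype.card_fin, nsmul_eq_mul]
    linear_combination sp_rp n
  · simp only [Mstar_ll, Pg_lr, Mstar_lr, Pg_rr, Fin.sum_univ_one, Sum.elim_inr, one_mul]
    by_cases hj : j = 0
    · subst hj
      simp only [eq_self_iff_true, if_true, one_mul, Finset.sum_const, Finset.card_univ,
        Fintype.card_fin, nsmul_eq_mul]
      linear_combination sm_rm n
    · have hj' : ¬((0:Fin n) = j) := fun h => hj h.symm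
      simp only [hj, if_false]
      rw [sum_fin_split]
      have hcong : ∀ k ∈ Finset.univ.erase (0 : Fin n),
          (if k = j then (1:ℝ) else if k = 0 then -1 else 0)
          = if k = j then (1:ℝ) else 0 := by
        intro k hk
        rw [Finset.mem_erase] at hk
        by_cases hkj : k = j
        · rw [if_pos hkj, if_pos hkj]
        · rw [if_neg hkj, if_neg hkj, if_neg hk.1]
      rw [Finset.sum_congr rfl hcong, Finset.sum_ite_eq',
        if_pos (Finset.mem_erase.mpr ⟨hj, Finset.mem_univ j⟩), if_neg hj', if_pos rfl]
      ring
  · simp only [Mstar_rl, Pg_ll, Mstar_rr, Pg_rl, Fin.sum_univ_one, Sum.elim_inl, mul_one, one_mul]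
    have hpt : ∀ k : Fin n, (if i = k then 2*(n:ℝ)-1 else 2)
        = 2 + (if i = k then 2*(n:ℝ)-3 else 0) := by
      intro k; split <;> ring
    rw [Finset.sum_congr rfl (fun k _ => hpt k), Finset.sum_add_distrib, Finset.sum_const,
      Finset.card_univ, Fintype.card_fin, nsmul_eq_mul, Finset.sum_ite_eq,
      if_pos (Finset.mem_univ i)]
    linear_combination hsp4
  · simp only [Mstar_rl, Pg_lr, Mstar_rr, Pg_rr, Fin.sum_univ_one, Sum.elim_inr, one_mul]
    by_cases hj : j = 0
    · subst hj
      simp only [eq_self_iff_true, if_true, mul_one]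
      have hpt : ∀ k : Fin n, (if i = k then 2*(n:ℝ)-1 else 2)
          = 2 + (if i = k then 2*(n:ℝ)-3 else 0) := by
        intro k; split <;> ring
      rw [Finset.sum_congr rfl (fun k _ => hpt k), Finset.sum_add_distrib, Finset.sum_const,
        Finset.card_univ, Fintype.card_fin, nsmul_eq_mul, Finset.sum_ite_eq,
        if_pos (Finset.mem_univ i)]
      linear_combination hsm4
    · have hj' : ¬((0:Fin n) = j) := fun h => hj h.symm
      simp only [hj, if_false]
      rw [sum_fin_split]
      have hcong : ∀ k ∈ Finset.univ.erase (0 : Fin n),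
          (if i = k then 2*(n:ℝ)-1 else 2) * (if k = j then (1:ℝ) else if k = 0 then -1 else 0)
          = if k = j then (if i = k then 2*(n:ℝ)-1 else 2) else 0 := by
        intro k hk
        rw [Finset.mem_erase] at hk
        by_cases hkj : k = j
        · rw [if_pos hkj, if_pos hkj, mul_one]
        · rw [if_neg hkj, if_neg hkj, if_neg hk.1, mul_zero]
      rw [Finset.sum_congr rfl hcong, Finset.sum_ite_eq',
        if_pos (Finset.mem_erase.mpr ⟨hj, Finset.mem_univ j⟩), if_neg hj', if_pos rfl]
      unfold av
      rcases eq_or_ne i j with hij | hij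
      · subst hij
        simp only [eq_self_iff_true, if_true, if_neg hj]
        ring
      · simp only [if_neg hij]
        by_cases hi0 : i = 0
        · subst hi0
          simp only [eq_self_iff_true, if_true]
          ring
        · simp only [if_neg hi0]
          ring

lemma charpoly_similar {ι : Type*} [Fintype ι] [DecidableEq ι]
    (M P Q T : Matrix ι ι ℝ) (hPQ : P * Q = 1) (hMP : M * P = P * T) :
    M.charpoly = T.charpoly := by
  have hM : M = P * T * Q := by
    calc M = M * P * Q := by rw [Matrix.mul_assoc, hPQ, Matrix.mul_one]
    _ = P * T * Q := by rw [hMP]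
  have hmap : (C : ℝ →+* ℝ[X]).mapMatrix P * (C : ℝ →+* ℝ[X]).mapMatrix Q = 1 := by
    rw [← _root_.map_mul, hPQ, _root_.map_one]
  have h2 : (C : ℝ →+* ℝ[X]).mapMatrix P * Matrix.scalar ι (X : ℝ[X]) *
      (C : ℝ →+* ℝ[X]).mapMatrix Q = Matrix.scalar ι (X : ℝ[X]) := by
    rw [← (Matrix.scalar_commute (X : ℝ[X]) (fun r' => Commute.all _ _)
      ((C : ℝ →+* ℝ[X]).mapMatrix P)).eq, Matrix.mul_assoc, hmap, Matrix.mul_one]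
  have hcm : charmatrix M =
      (C : ℝ →+* ℝ[X]).mapMatrix P * charmatrix T * (C : ℝ →+* ℝ[X]).mapMatrix Q := by
    rw [hM, charmatrix, charmatrix, Matrix.mul_sub, Matrix.sub_mul, h2, _root_.map_mul, _root_.map_mul]
  rw [Matrix.charpoly, hcm, Matrix.det_mul, Matrix.det_mul, Matrix.charpoly, mul_right_comm,
    ← Matrix.det_mul, hmap, Matrix.det_one, one_mul]

lemma charpoly_diag {ι : Type*} [Fintype ι] [DecidableEq ι] (f : ι → ℝ) :
    (Matrix.diagonal f).charpoly = ∏ i, (X - C (f i)) := by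
  have h : charmatrix (Matrix.diagonal f) = Matrix.diagonal (fun i => X - C (f i)) := by
    ext i j
    by_cases hij : i = j
    · subst hij; simp
    · simp [hij, Matrix.diagonal_apply_ne _ hij]
  rw [Matrix.charpoly, h, Matrix.det_diagonal]

lemma star_charpoly (n : ℕ) [NeZero n] :
    (distSignlessLapMatrix (starGraph n)).charpoly =
      (X - C (rpv n)) * ((X - C (rmv n)) * (X - C (av n)) ^ (n - 1)) := by
  rw [distSignlessLap_star_eq,
    charpoly_similar (Mstar n) (Pg n) (Qg n) (Dg n) (PQ_one n) (MP_eq n),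
    Dg, charpoly_diag, Fintype.prod_sum_type]
  congr 1
  · simp
  · simp only [Sum.elim_inr]
    rw [← Finset.mul_prod_erase _ _ (Finset.mem_univ (0 : Fin n))]
    have hc : ∀ k ∈ Finset.univ.erase (0 : Fin n),
        ((X : ℝ[X]) - C (if k = 0 then rmv n else av n)) = X - C (av n) := by
      intro k hk
      rw [Finset.mem_erase] at hk
      rw [if_neg hk.1]
    rw [Finset.prod_congr rfl hc, Finset.prod_const, card_erase_zero]
    norm_num

lemma star_rootMult (n : ℕ) (hn : 2 ≤ n) :
    (distSignlessLapMatrix (starGraph n)).charpoly.rootMultiplicity (av n) = n - 1 ∧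
    (distSignlessLapMatrix (starGraph n)).charpoly.rootMultiplicity (rpv n) = 1 ∧
    (distSignlessLapMatrix (starGraph n)).charpoly.rootMultiplicity (rmv n) = 1 := by
  haveI : NeZero n := ⟨by omega⟩
  have hr2 : (2:ℝ) ≤ (n:ℝ) := by exact_mod_cast hn
  have hrprm : rpv n ≠ rmv n := by
    unfold rpv rmv
    intro h
    nlinarith [sdv_pos n]
  have hval : av n ^ 2 - (5*(n:ℝ)-3) * av n + (4*(n:ℝ)^2 - 4*n) = (n:ℝ) * (5 - 2*(n:ℝ)) := by
    unfold av; ring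
  have h25 : (5:ℝ) - 2*(n:ℝ) ≠ 0 := by
    intro h
    have h' : 2 * (n:ℕ) = 5 := by exact_mod_cast (by linarith : 2*(n:ℝ) = 5)
    omega
  have haq : av n ^ 2 - (5*(n:ℝ)-3) * av n + (4*(n:ℝ)^2 - 4*n) ≠ 0 := by
    rw [hval]
    exact mul_ne_zero (by positivity) h25
  have hap : av n ≠ rpv n := by
    intro h
    exact haq (by rw [h]; exact rp_quad n)
  have ham : av n ≠ rmv n := by
    intro h
    exact haq (by rw [h]; exact rm_quad n)
  have hXp : (X - C (rpv n)) ≠ (0 : ℝ[X]) := X_sub_C_ne_zero _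
  have hXm : (X - C (rmv n)) ≠ (0 : ℝ[X]) := X_sub_C_ne_zero _
  have hXa : ((X - C (av n)) ^ (n-1)) ≠ (0 : ℝ[X]) :=
    pow_ne_zero _ (X_sub_C_ne_zero _)
  have htail : (X - C (rmv n)) * (X - C (av n)) ^ (n-1) ≠ (0 : ℝ[X]) := mul_ne_zero hXm hXa
  have hprod : (X - C (rpv n)) * ((X - C (rmv n)) * (X - C (av n)) ^ (n-1)) ≠ (0 : ℝ[X]) :=
    mul_ne_zero hXp htail
  have hpowroot : ∀ x : ℝ, x ≠ av n → rootMultiplicity x ((X - C (av n)) ^ (n-1)) = 0 := by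
    intro x hx
    apply rootMultiplicity_eq_zero
    simp [Polynomial.IsRoot, sub_ne_zero.mpr hx]
  have hch := star_charpoly n
  refine ⟨?_, ?_, ?_⟩
  · rw [hch, rootMultiplicity_mul hprod, rootMultiplicity_mul htail,
      rootMultiplicity_X_sub_C_pow, rootMultiplicity_X_sub_C, rootMultiplicity_X_sub_C,
      if_neg hap, if_neg ham]
    omega
  · rw [hch, rootMultiplicity_mul hprod, rootMultiplicity_mul htail,
      rootMultiplicity_X_sub_C_self, rootMultiplicity_X_sub_C, if_neg hrprm,
      hpowroot _ (Ne.symm hap)]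
  · rw [hch, rootMultiplicity_mul hprod, rootMultiplicity_mul htail,
      rootMultiplicity_X_sub_C_self, rootMultiplicity_X_sub_C, if_neg (Ne.symm hrprm),
      hpowroot _ (Ne.symm ham)]

theorem metacyclic_cocentralizer_distance_signless_laplacian_spectrum (m : ℕ) (hm : 2 < m) :
    (Even m →
      (distSignlessLapMatrix (starGraph (m / 2))).charpoly.rootMultiplicity ((m : ℝ) - 3) =
        m / 2 - 1 ∧
      (distSignlessLapMatrix (starGraph (m / 2))).charpoly.rootMultiplicity
        ((1 / 2) * ((5 * (m : ℝ) / 2 - 3) + Real.sqrt (9 * (m : ℝ) ^ 2 / 4 - 7 * m + 9))) = 1 ∧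
      (distSignlessLapMatrix (starGraph (m / 2))).charpoly.rootMultiplicity
        ((1 / 2) * ((5 * (m : ℝ) / 2 - 3) - Real.sqrt (9 * (m : ℝ) ^ 2 / 4 - 7 * m + 9))) = 1) ∧
    (Odd m →
      (distSignlessLapMatrix (starGraph m)).charpoly.rootMultiplicity (2 * (m : ℝ) - 3) =
        m - 1 ∧
      (distSignlessLapMatrix (starGraph m)).charpoly.rootMultiplicity
        ((1 / 2) * ((5 * (m : ℝ) - 3) + Real.sqrt (9 * (m : ℝ) ^ 2 - 14 * m + 9))) = 1 ∧
      (distSignlessLapMatrix (starGraph m)).charpoly.rootMultiplicity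
        ((1 / 2) * ((5 * (m : ℝ) - 3) - Real.sqrt (9 * (m : ℝ) ^ 2 - 14 * m + 9))) = 1) := by
  constructor
  · intro hEven
    obtain ⟨k, hk⟩ := hEven
    have hm2 : m / 2 = k := by omega
    have hk2 : 2 ≤ k := by omega
    have hcast : (m : ℝ) = 2 * (k : ℝ) := by
      subst hk; push_cast; ring
    obtain ⟨h1, h2, h3⟩ := star_rootMult k hk2
    rw [hm2]
    have hsqrt : (9 * (m : ℝ) ^ 2 / 4 - 7 * m + 9) = 9 * (k : ℝ) ^ 2 - 14 * k + 9 := by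
      rw [hcast]; ring
    refine ⟨?_, ?_, ?_⟩
    · rw [show (m : ℝ) - 3 = av k by unfold av; linear_combination hcast]
      exact h1
    · rw [show (1/2 : ℝ) * ((5 * (m : ℝ) / 2 - 3) + Real.sqrt (9 * (m : ℝ) ^ 2 / 4 - 7 * m + 9))
          = rpv k by unfold rpv sdv; rw [hsqrt]; linear_combination (5/4 : ℝ) * hcast]
      exact h2
    · rw [show (1/2 : ℝ) * ((5 * (m : ℝ) / 2 - 3) - Real.sqrt (9 * (m : ℝ) ^ 2 / 4 - 7 * m + 9))
          = rmv k by unfold rmv sdv; rw [hsqrt]; linear_combination (5/4 : ℝ) * hcast]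
      exact h3
  · intro _
    obtain ⟨h1, h2, h3⟩ := star_rootMult m (by omega)
    refine ⟨?_, ?_, ?_⟩
    · rw [show 2 * (m : ℝ) - 3 = av m by unfold av; ring]
      exact h1
    · rw [show (1/2 : ℝ) * ((5 * (m : ℝ) - 3) + Real.sqrt (9 * (m : ℝ) ^ 2 - 14 * m + 9))
          = rpv m by unfold rpv sdv; ring]
      exact h2
    · rw [show (1/2 : ℝ) * ((5 * (m : ℝ) - 3) - Real.sqrt (9 * (m : ℝ) ^ 2 - 14 * m + 9))
          = rmv m by unfold rmv sdv; ring]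
      exact h3
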